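/- Let (K, v) and (H, u) be Abelian unital po-groups and let (E_t : t ∈ [0,u]_H) be an ordered and directed (H, u)-decomposition of E = Γ(K, v). Then for all x, y ∈ E: x ∼_{E_0} y if and only if x and y lie in the same member E_t of the decomposition. Consequently, the map sending the ∼_{E_0}-class of x to the unique t with x ∈ E_t is a well-defined isomorphism of the quotient effect algebra E/E_0 onto Γ(H, u). -/

import Mathlib

open Set

/-! Common vocabulary: interval effect algebras `Γ(K, v) = Set.Icc 0 v` in Abelian
po-groups (`OrderedAddCommGroup`), ideals, decompositions, states, etc., following
Dvurečenskij, "Lexicographic effect algebras". -/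

section Defs

variable {K : Type*} [AddCommGroup K] [PartialOrder K] [IsOrderedAddMonoid K]
variable {H : Type*} [AddCommGroup H] [PartialOrder H] [IsOrderedAddMonoid H]
variable {L : Type*} [AddCommGroup L] [PartialOrder L] [IsOrderedAddMonoid L]

/-- `v` is a strong unit of the po-group `K`. -/
def IsStrongUnit (v : K) : Prop := 0 ≤ v ∧ ∀ g : K, ∃ n : ℕ, g ≤ n • v

/-- The Riesz decomposition property for a po-group. -/
def RDP (K : Type*) [AddCommGroup K] [PartialOrder K] [IsOrderedAddMonoid K] : Prop :=
  ∀ a₁ a₂ b₁ b₂ : K, 0 ≤ a₁ → 0 ≤ a₂ → 0 ≤ b₁ → 0 ≤ b₂ → a₁ + a₂ = b₁ + b₂ →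
    ∃ c₁₁ c₁₂ c₂₁ c₂₂ : K, 0 ≤ c₁₁ ∧ 0 ≤ c₁₂ ∧ 0 ≤ c₂₁ ∧ 0 ≤ c₂₂ ∧
      a₁ = c₁₁ + c₁₂ ∧ a₂ = c₂₁ + c₂₂ ∧ b₁ = c₁₁ + c₂₁ ∧ b₂ = c₁₂ + c₂₂

/-- A poset is an antilattice if any two elements possessing a supremum or an
infimum are comparable. -/
def IsAntilattice (α : Type*) [PartialOrder α] : Prop :=
  ∀ a b : α, ((∃ c, IsLUB {a, b} c) ∨ (∃ c, IsGLB {a, b} c)) → a ≤ b ∨ b ≤ a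

/-- A po-group is directed if any two elements have a common upper bound. -/
def IsDirectedGroup (G : Type*) [AddCommGroup G] [PartialOrder G] [IsOrderedAddMonoid G] : Prop :=
  ∀ a b : G, ∃ c : G, a ≤ c ∧ b ≤ c

/-- An ideal of the interval effect algebra `Γ(K, v)`. -/
def IsIdeal (v : K) (I : Set K) : Prop :=
  I.Nonempty ∧ I ⊆ Icc 0 v ∧
  (∀ x ∈ Icc (0 : K) v, ∀ y ∈ I, x ≤ y → x ∈ I) ∧
  (∀ x ∈ I, ∀ y ∈ I, x + y ≤ v → x + y ∈ I)

/-- An effect subalgebra of `Γ(K, v)`. -/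
def IsEffectSubalgebra (v : K) (F : Set K) : Prop :=
  F ⊆ Icc 0 v ∧ v ∈ F ∧ (∀ x ∈ F, v - x ∈ F) ∧
  ∀ x ∈ F, ∀ y ∈ F, x + y ≤ v → x + y ∈ F

/-- The relation `x ∼_I y`. -/
def SimI (I : Set K) (x y : K) : Prop :=
  ∃ e ∈ I, ∃ f ∈ I, e ≤ x ∧ f ≤ y ∧ x - e = y - f

/-- `x/I ≤ y/I` in the quotient. -/
def QuotLE (v : K) (I : Set K) (x y : K) : Prop :=
  ∃ x₁ ∈ Icc (0 : K) v, SimI I x₁ x ∧ x₁ ≤ y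

/-- `x/I < y/I` in the quotient. -/
def QuotLT (v : K) (I : Set K) (x y : K) : Prop :=
  QuotLE v I x y ∧ ¬ SimI I x y

/-- A strict ideal. -/
def IsStrictIdeal (v : K) (I : Set K) : Prop :=
  IsIdeal v I ∧ ∀ x ∈ Icc (0 : K) v, ∀ y ∈ Icc (0 : K) v, QuotLT v I x y → x < y

/-- The ideal `I₀(a)` of `Γ(K, v)` generated by `a`: all finite sums of elements below `a`. -/
def IdealGen (v a : K) : Set K :=
  {x | x ∈ Icc 0 v ∧ ∃ l : List K, l ≠ [] ∧ (∀ b ∈ l, b ∈ Icc 0 v ∧ b ≤ a) ∧ l.sum = x}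

/-- A prime ideal. -/
def IsPrimeIdeal (v : K) (I : Set K) : Prop :=
  IsIdeal v I ∧
  ∀ x ∈ Icc (0 : K) v, ∀ y ∈ Icc (0 : K) v, IdealGen v x ∩ IdealGen v y ⊆ I → x ∈ I ∨ y ∈ I

/-- A retractive ideal: the canonical projection onto the quotient has a right inverse,
encoded by a map `r : E → E` constant on `∼_I`-classes. -/
def IsRetractiveIdeal (v : K) (I : Set K) : Prop :=
  IsIdeal v I ∧ ∃ r : K → K,
    (∀ x ∈ Icc (0 : K) v, r x ∈ Icc (0 : K) v) ∧ r v = v ∧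
    (∀ x ∈ Icc (0 : K) v, ∀ y ∈ Icc (0 : K) v, x + y ≤ v → r (x + y) = r x + r y) ∧
    (∀ x ∈ Icc (0 : K) v, SimI I (r x) x) ∧
    (∀ x ∈ Icc (0 : K) v, ∀ y ∈ Icc (0 : K) v, SimI I x y → r x = r y)

/-- A lexicographic ideal: a nontrivial ideal that is strict, retractive and prime. -/
def IsLexIdeal (v : K) (I : Set K) : Prop :=
  IsIdeal v I ∧ I ≠ {0} ∧ I ≠ Icc 0 v ∧
    IsStrictIdeal v I ∧ IsRetractiveIdeal v I ∧ IsPrimeIdeal v I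

/-- The set of infinitesimal elements of `Γ(K, v)`. -/
def Infin (v : K) : Set K := {x | x ∈ Icc 0 v ∧ ∀ n : ℕ, n • x ≤ v}

/-- A maximal ideal. -/
def IsMaximalIdeal (v : K) (I : Set K) : Prop :=
  IsIdeal v I ∧ I ≠ Icc 0 v ∧ ∀ J : Set K, IsIdeal v J → I ⊂ J → J = Icc 0 v

/-- A local effect algebra: exactly one maximal ideal. -/
def IsLocal (v : K) : Prop := ∃! I : Set K, IsMaximalIdeal v I

/-- The radical: the intersection of all maximal ideals. -/
def Rad (v : K) : Set K := ⋂₀ {I : Set K | IsMaximalIdeal v I}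

/-- A Riesz ideal. -/
def IsRieszIdeal (v : K) (I : Set K) : Prop :=
  IsIdeal v I ∧ ∀ i ∈ I, ∀ a ∈ Icc (0 : K) v, ∀ b ∈ Icc (0 : K) v, a + b ≤ v → i ≤ a + b →
    ∃ ia ∈ I, ∃ ib ∈ I, ia ≤ a ∧ ib ≤ b ∧ ia + ib ≤ v ∧ i ≤ ia + ib

/-- A (real-valued) state on `Γ(K, v)`. -/
def IsState (v : K) (s : K → ℝ) : Prop :=
  (∀ x ∈ Icc (0 : K) v, s x ∈ Icc (0 : ℝ) 1) ∧ s v = 1 ∧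
  ∀ x ∈ Icc (0 : K) v, ∀ y ∈ Icc (0 : K) v, x + y ≤ v → s (x + y) = s x + s y

/-- `Γ(K, v)` has exactly one state (uniqueness meaning: any two states agree on `Γ(K, v)`). -/
def HasUniqueState (v : K) : Prop :=
  (∃ s : K → ℝ, IsState v s) ∧
  ∀ s s' : K → ℝ, IsState v s → IsState v s' → ∀ x ∈ Icc (0 : K) v, s x = s' x

/-- An `(H, u)`-decomposition of `Γ(K, v)`. -/
def IsDecomp (v : K) (u : H) (E : H → Set K) : Prop :=
  (∀ t ∈ Icc (0 : H) u, (E t).Nonempty) ∧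
  (∀ s ∈ Icc (0 : H) u, ∀ t ∈ Icc (0 : H) u, s ≠ t → E s ∩ E t = ∅) ∧
  (⋃ t ∈ Icc (0 : H) u, E t) = Icc 0 v ∧
  (∀ t ∈ Icc (0 : H) u, (fun x => v - x) '' E t = E (u - t)) ∧
  (∀ s ∈ Icc (0 : H) u, ∀ t ∈ Icc (0 : H) u, ∀ x ∈ E s, ∀ y ∈ E t, x + y ≤ v →
    s + t ≤ u ∧ x + y ∈ E (s + t))

/-- An ordered `(H, u)`-decomposition. -/
def IsOrderedDecomp (v : K) (u : H) (E : H → Set K) : Prop :=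
  IsDecomp v u E ∧
  ∀ s ∈ Icc (0 : H) u, ∀ t ∈ Icc (0 : H) u, s < t → ∀ x ∈ E s, ∀ y ∈ E t, x < y

/-- A directed `(H, u)`-decomposition. -/
def IsDirectedDecomp (v : K) (u : H) (E : H → Set K) : Prop :=
  IsDecomp v u E ∧
  ∀ t ∈ Icc (0 : H) u,
    (∀ x ∈ E t, ∀ y ∈ E t, ∃ z ∈ E t, x ≤ z ∧ y ≤ z) ∧
    (∀ x ∈ E t, ∀ y ∈ E t, ∃ z ∈ E t, z ≤ x ∧ z ≤ y)

/-- A strong `(H, u)`-decomposition, with witnessing elements `c t ∈ E t`. -/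
def IsStrongDecomp (v : K) (u : H) (E : H → Set K) (c : H → K) : Prop :=
  IsOrderedDecomp v u E ∧ IsDirectedDecomp v u E ∧
  (∀ t ∈ Icc (0 : H) u, c t ∈ E t) ∧
  (∀ s ∈ Icc (0 : H) u, ∀ t ∈ Icc (0 : H) u, s + t ≤ u → c (s + t) = c s + c t) ∧
  c u = v

/-- A strong `(H, u)`-perfect effect algebra. -/
def IsStrongPerfect (v : K) (u : H) : Prop :=
  ∃ (E : H → Set K) (c : H → K), IsStrongDecomp v u E c

/-- A homomorphism of interval effect algebras `Γ(K, v) → Γ(L, w)`. -/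
def IsEffectHom (v : K) (w : L) (f : K → L) : Prop :=
  (∀ x ∈ Icc (0 : K) v, f x ∈ Icc (0 : L) w) ∧ f v = w ∧
  ∀ x ∈ Icc (0 : K) v, ∀ y ∈ Icc (0 : K) v, x + y ≤ v →
    f x + f y ≤ w ∧ f (x + y) = f x + f y

/-- An isomorphism of interval effect algebras `Γ(K, v) ≅ Γ(L, w)`. -/
def IsEffectIso (v : K) (w : L) (f : K → L) : Prop :=
  IsEffectHom v w f ∧ ∃ g : L → K, IsEffectHom w v g ∧
    (∀ x ∈ Icc (0 : K) v, g (f x) = x) ∧ (∀ y ∈ Icc (0 : L) w, f (g y) = y)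

/-- An o-ideal of a po-group: a directed convex subgroup. -/
def IsOIdeal (H : Type*) [AddCommGroup H] [PartialOrder H] [IsOrderedAddMonoid H] (S : AddSubgroup H) : Prop :=
  (∀ a ∈ S, ∀ b ∈ S, ∃ c ∈ S, a ≤ c ∧ b ≤ c) ∧
  (∀ a ∈ S, ∀ b ∈ S, ∀ x : H, a ≤ x → x ≤ b → x ∈ S)

/-- A simple po-group: the only o-ideals are `⊥` and `⊤`. -/
def IsSimplePoGroup (H : Type*) [AddCommGroup H] [PartialOrder H] [IsOrderedAddMonoid H] : Prop :=
  ∀ S : AddSubgroup H, IsOIdeal H S → S = ⊥ ∨ S = ⊤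

/-- `Γ(H, u)` is Archimedean: its only infinitesimal element is `0`. -/
def GammaArchimedean (u : H) : Prop :=
  ∀ t ∈ Icc (0 : H) u, (∀ n : ℕ, n • t ≤ u) → t = 0

/-- `φ : K → H` witnesses an isomorphism of the quotient effect algebra `Γ(K,v)/I`
onto `Γ(H, u)`: it is an additive surjection onto `[0,u]` whose fibers on `Γ(K,v)`
are exactly the `∼_I`-classes, and it transports the quotient order. -/
def QuotIsoWitness (v : K) (I : Set K) (u : H) (φ : K → H) : Prop :=
  (∀ x ∈ Icc (0 : K) v, φ x ∈ Icc (0 : H) u) ∧ φ v = u ∧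
  (∀ x ∈ Icc (0 : K) v, ∀ y ∈ Icc (0 : K) v, x + y ≤ v → φ (x + y) = φ x + φ y) ∧
  (∀ t ∈ Icc (0 : H) u, ∃ x ∈ Icc (0 : K) v, φ x = t) ∧
  (∀ x ∈ Icc (0 : K) v, ∀ y ∈ Icc (0 : K) v, (φ x = φ y ↔ SimI I x y)) ∧
  (∀ x ∈ Icc (0 : K) v, ∀ y ∈ Icc (0 : K) v, (φ x ≤ φ y ↔ QuotLE v I x y))

/-- The quotient effect algebra `Γ(K,v)/I` is isomorphic to `Γ(H, u)`. -/
def IsQuotIso (v : K) (I : Set K) (u : H) : Prop :=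
  ∃ φ : K → H, QuotIsoWitness v I u φ

/-- The sub-effect algebra with carrier `S ⊆ Γ(K, v)` and unit `v` is isomorphic
to the interval effect algebra `Γ(L, w)`. -/
def IsSubalgebraIso (v : K) (S : Set K) (w : L) : Prop :=
  ∃ f : K → L,
    (∀ x ∈ S, f x ∈ Icc (0 : L) w) ∧ f v = w ∧
    (∀ x ∈ S, ∀ y ∈ S, x + y ≤ v → f x + f y ≤ w ∧ f (x + y) = f x + f y) ∧
    ∃ g : L → K,
      (∀ a ∈ Icc (0 : L) w, g a ∈ S) ∧ g w = v ∧
      (∀ a ∈ Icc (0 : L) w, ∀ b ∈ Icc (0 : L) w, a + b ≤ w →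
        g a + g b ≤ v ∧ g (a + b) = g a + g b) ∧
      (∀ x ∈ S, g (f x) = x) ∧ (∀ a ∈ Icc (0 : L) w, f (g a) = a)

/-- An `(H, u)`-valued state on `Γ(K, v)`, as a map of subtypes. -/
def IsSubValuedState (v : K) (u : H) (s : Icc (0 : K) v → Icc (0 : H) u) : Prop :=
  (∀ x : Icc (0 : K) v, (x : K) = v → ((s x : H) = u)) ∧
  (∀ x y z : Icc (0 : K) v, (z : K) = (x : K) + (y : K) →
    ((s z : H) = (s x : H) + (s y : H))) ∧
  Function.Surjective s

/-- An `(H, u)`-decomposition of `Γ(K, v)`, as a family indexed by the subtype `[0,u]`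
of sets of the subtype `Γ(K, v)`. -/
def IsSubDecomp (v : K) (u : H) (E : Icc (0 : H) u → Set (Icc (0 : K) v)) : Prop :=
  (∀ t, (E t).Nonempty) ∧
  (∀ s t : Icc (0 : H) u, s ≠ t → E s ∩ E t = ∅) ∧
  (⋃ t, E t) = Set.univ ∧
  (∀ t t' : Icc (0 : H) u, (t' : H) = u - t →
    ∀ x x' : Icc (0 : K) v, (x' : K) = v - x → (x ∈ E t ↔ x' ∈ E t')) ∧
  (∀ s t : Icc (0 : H) u, ∀ x y z : Icc (0 : K) v, x ∈ E s → y ∈ E t →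
    (z : K) = (x : K) + (y : K) →
    ∃ w : Icc (0 : H) u, (w : H) = (s : H) + (t : H) ∧ z ∈ E w)

end Defs

/-! The index `t(x)` of the member `E_t` containing `x` is additive on `Γ(K, v)`, so
`t(y - x) = t(y) - t(x)` for `x ≤ y` and `E_0` is its kernel. Hence `x ∼_{E_0} y` forces
`t(x) = t(y)`; conversely, if `t(x) = t(y)`, downward directedness of `E_{t(x)}` yields a common
lower bound `z` there, and `x - z`, `y - z` lie in `E_0`. Orderedness makes `t(x) < t(y)` imply
`x < y`, which identifies the quotient order with the order of `[0, u]_H`. -/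

section Decomposition

variable {K H : Type*} [AddCommGroup K] [PartialOrder K] [AddCommGroup H] [PartialOrder H]
  {v : K} {u : H} {E : H → Set K} {s t : H} {x y : K}

open Classical in
/-- The index `t` of the member `E t` containing `x`; the junk value `0` outside `Γ(K, v)`. -/
noncomputable def decompIndex (u : H) (E : H → Set K) (x : K) : H :=
  if h : ∃ t ∈ Icc (0 : H) u, x ∈ E t then h.choose else 0

namespace IsDecomp

theorem mem_Icc_iff (hE : IsDecomp v u E) : x ∈ Icc 0 v ↔ ∃ t ∈ Icc 0 u, x ∈ E t := by
  rw [← hE.2.2.1, mem_iUnion₂]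
  simp only [exists_prop]

theorem eq_of_mem (hE : IsDecomp v u E) (hs : s ∈ Icc 0 u) (ht : t ∈ Icc 0 u)
    (hxs : x ∈ E s) (hxt : x ∈ E t) : s = t := by
  by_contra hst
  exact (hE.2.1 s hs t ht hst).subset ⟨hxs, hxt⟩

theorem decompIndex_spec (hE : IsDecomp v u E) (hx : x ∈ Icc 0 v) :
    decompIndex u E x ∈ Icc 0 u ∧ x ∈ E (decompIndex u E x) := by
  have h := hE.mem_Icc_iff.1 hx
  rw [decompIndex, dif_pos h]
  exact h.choose_spec

theorem decompIndex_eq (hE : IsDecomp v u E) (ht : t ∈ Icc 0 u) (hx : x ∈ E t) :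
    decompIndex u E x = t :=
  have hx' := hE.decompIndex_spec (hE.mem_Icc_iff.2 ⟨t, ht, hx⟩)
  hE.eq_of_mem hx'.1 ht hx'.2 hx

theorem decompIndex_eq_iff (hE : IsDecomp v u E) (hx : x ∈ Icc 0 v) (hy : y ∈ Icc 0 v) :
    decompIndex u E x = decompIndex u E y ↔ ∃ t ∈ Icc 0 u, x ∈ E t ∧ y ∈ E t := by
  constructor
  · intro h
    exact ⟨_, (hE.decompIndex_spec hx).1, (hE.decompIndex_spec hx).2,
      h ▸ (hE.decompIndex_spec hy).2⟩
  · rintro ⟨t, ht, hxt, hyt⟩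
    rw [hE.decompIndex_eq ht hxt, hE.decompIndex_eq ht hyt]

theorem exists_decompIndex_eq (hE : IsDecomp v u E) (ht : t ∈ Icc 0 u) :
    ∃ x ∈ Icc 0 v, decompIndex u E x = t :=
  have ⟨x, hx⟩ := hE.1 t ht
  ⟨x, hE.mem_Icc_iff.2 ⟨t, ht, hx⟩, hE.decompIndex_eq ht hx⟩

end IsDecomp

theorem IsDirectedDecomp.exists_le_le (hE : IsDirectedDecomp v u E) (hx : x ∈ Icc 0 v)
    (hy : y ∈ Icc 0 v) (h : decompIndex u E x = decompIndex u E y) :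
    ∃ z ∈ Icc 0 v, z ≤ x ∧ z ≤ y ∧ decompIndex u E z = decompIndex u E x := by
  obtain ⟨hxI, hxE⟩ := hE.1.decompIndex_spec hx
  obtain ⟨z, hz, hzx, hzy⟩ := (hE.2 _ hxI).2 x hxE y (h ▸ (hE.1.decompIndex_spec hy).2)
  exact ⟨z, hE.1.mem_Icc_iff.2 ⟨_, hxI, hz⟩, hzx, hzy, hE.1.decompIndex_eq hxI hz⟩

theorem IsDecomp.decompIndex_add [IsOrderedAddMonoid H] (hE : IsDecomp v u E)
    (hx : x ∈ Icc 0 v) (hy : y ∈ Icc 0 v) (hxy : x + y ≤ v) :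
    decompIndex u E (x + y) = decompIndex u E x + decompIndex u E y := by
  obtain ⟨hxI, hxE⟩ := hE.decompIndex_spec hx
  obtain ⟨hyI, hyE⟩ := hE.decompIndex_spec hy
  obtain ⟨hle, hmem⟩ := hE.2.2.2.2 _ hxI _ hyI x hxE y hyE hxy
  exact hE.decompIndex_eq ⟨add_nonneg hxI.1 hyI.1, hle⟩ hmem

variable [IsOrderedAddMonoid K] [IsOrderedAddMonoid H]

theorem sub_mem_Icc_zero (hx : x ∈ Icc 0 v) (hy : y ∈ Icc 0 v) (hxy : x ≤ y) :
    y - x ∈ Icc 0 v :=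
  ⟨sub_nonneg.2 hxy, (sub_le_self y hx.1).trans hy.2⟩

namespace IsDecomp

theorem decompIndex_sub (hE : IsDecomp v u E) (hx : x ∈ Icc 0 v) (hy : y ∈ Icc 0 v)
    (hxy : x ≤ y) : decompIndex u E (y - x) = decompIndex u E y - decompIndex u E x := by
  have h := hE.decompIndex_add hx (sub_mem_Icc_zero hx hy hxy) (by rw [add_sub_cancel]; exact hy.2)
  rw [add_sub_cancel] at h
  rw [h, add_sub_cancel_left]

theorem decompIndex_mono (hE : IsDecomp v u E) (hx : x ∈ Icc 0 v) (hy : y ∈ Icc 0 v)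
    (hxy : x ≤ y) : decompIndex u E x ≤ decompIndex u E y := by
  have h := (hE.decompIndex_spec (sub_mem_Icc_zero hx hy hxy)).1.1
  rwa [hE.decompIndex_sub hx hy hxy, sub_nonneg] at h

theorem decompIndex_zero (hE : IsDecomp v u E) (hv : 0 ≤ v) : decompIndex u E (0 : K) = 0 := by
  simpa using hE.decompIndex_sub (x := 0) ⟨le_rfl, hv⟩ ⟨le_rfl, hv⟩ le_rfl

theorem zero_mem_Icc (hE : IsDecomp v u E) (hv : 0 ≤ v) : (0 : H) ∈ Icc 0 u :=
  hE.decompIndex_zero hv ▸ (hE.decompIndex_spec ⟨le_rfl, hv⟩).1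

theorem mem_zero_iff (hE : IsDecomp v u E) (hx : x ∈ Icc 0 v) :
    x ∈ E 0 ↔ decompIndex u E x = 0 :=
  ⟨hE.decompIndex_eq (hE.zero_mem_Icc (hx.1.trans hx.2)),
    fun h => h ▸ (hE.decompIndex_spec hx).2⟩

/-- `0 = v - v` lies in `E (u - t)` for the index `t` of `v`. -/
theorem decompIndex_self (hE : IsDecomp v u E) (hv : 0 ≤ v) : decompIndex u E v = u := by
  obtain ⟨⟨ht0, htu⟩, hvE⟩ := hE.decompIndex_spec ⟨hv, le_rfl⟩
  have h0 : (0 : K) ∈ E (u - decompIndex u E v) := by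
    rw [← hE.2.2.2.1 _ ⟨ht0, htu⟩]
    exact ⟨v, hvE, sub_self v⟩
  have h := hE.decompIndex_eq ⟨sub_nonneg.2 htu, sub_le_self u ht0⟩ h0
  rw [hE.decompIndex_zero hv] at h
  exact (sub_eq_zero.1 h.symm).symm

theorem decompIndex_eq_of_simI (hE : IsDecomp v u E) (hx : x ∈ Icc 0 v) (hy : y ∈ Icc 0 v)
    (h : SimI (E 0) x y) : decompIndex u E x = decompIndex u E y := by
  obtain ⟨e, he, f, hf, hex, hfy, hef⟩ := h
  have h0 := hE.zero_mem_Icc (hx.1.trans hx.2)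
  have heI := hE.mem_Icc_iff.2 ⟨0, h0, he⟩
  have hfI := hE.mem_Icc_iff.2 ⟨0, h0, hf⟩
  have hx' := hE.decompIndex_sub heI hx hex
  have hy' := hE.decompIndex_sub hfI hy hfy
  rw [(hE.mem_zero_iff heI).1 he, sub_zero] at hx'
  rw [(hE.mem_zero_iff hfI).1 hf, sub_zero] at hy'
  rw [← hx', ← hy', hef]

end IsDecomp

theorem IsDirectedDecomp.simI_zero_iff (hE : IsDirectedDecomp v u E) (hx : x ∈ Icc 0 v)
    (hy : y ∈ Icc 0 v) : SimI (E 0) x y ↔ decompIndex u E x = decompIndex u E y := by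
  refine ⟨hE.1.decompIndex_eq_of_simI hx hy, fun h => ?_⟩
  obtain ⟨z, hz, hzx, hzy, hzi⟩ := hE.exists_le_le hx hy h
  have hsub_mem :
      ∀ w ∈ Icc 0 v, z ≤ w → decompIndex u E w = decompIndex u E x → w - z ∈ E 0 :=
    fun w hw hzw hwi => (hE.1.mem_zero_iff (sub_mem_Icc_zero hz hw hzw)).2
      (by rw [hE.1.decompIndex_sub hz hw hzw, hwi, hzi, sub_self])
  exact ⟨x - z, hsub_mem x hx hzx rfl, y - z, hsub_mem y hy hzy h.symm,
    sub_le_self x hz.1, sub_le_self y hz.1, by rw [sub_sub_cancel, sub_sub_cancel]⟩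

theorem IsOrderedDecomp.quotLE_zero_iff (hE : IsOrderedDecomp v u E)
    (hE' : IsDirectedDecomp v u E) (hx : x ∈ Icc 0 v) (hy : y ∈ Icc 0 v) :
    QuotLE v (E 0) x y ↔ decompIndex u E x ≤ decompIndex u E y := by
  constructor
  · rintro ⟨x₁, hx₁, hsim, hx₁y⟩
    rw [← (hE'.simI_zero_iff hx₁ hx).1 hsim]
    exact hE.1.decompIndex_mono hx₁ hy hx₁y
  · intro hle
    rcases hle.eq_or_lt with heq | hlt
    · obtain ⟨z, hz, hzx, hzy, hzi⟩ := hE'.exists_le_le hx hy heq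
      exact ⟨z, hz, (hE'.simI_zero_iff hz hx).2 hzi, hzy⟩
    · have hxy := hE.2 _ (hE.1.decompIndex_spec hx).1 _ (hE.1.decompIndex_spec hy).1 hlt
        x (hE.1.decompIndex_spec hx).2 y (hE.1.decompIndex_spec hy).2
      exact ⟨x, hx, (hE'.simI_zero_iff hx hx).2 rfl, hxy.le⟩

end Decomposition

theorem quotient_by_zero_part_iso_general {K H : Type*}
    [AddCommGroup K] [PartialOrder K] [IsOrderedAddMonoid K] [AddCommGroup H] [PartialOrder H] [IsOrderedAddMonoid H]
    (v : K) (u : H) (hv : IsStrongUnit v)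
    (E : H → Set K) (hE : IsOrderedDecomp v u E) (hE' : IsDirectedDecomp v u E) :
    (∀ x ∈ Icc (0 : K) v, ∀ y ∈ Icc (0 : K) v,
      (SimI (E 0) x y ↔ ∃ t ∈ Icc (0 : H) u, x ∈ E t ∧ y ∈ E t)) ∧
    ∃ φ : K → H, (∀ t ∈ Icc (0 : H) u, ∀ x ∈ E t, φ x = t) ∧
      QuotIsoWitness v (E 0) u φ := by
  have hD : IsDecomp v u E := hE.1
  refine ⟨fun x hx y hy => (hE'.simI_zero_iff hx hy).trans (hD.decompIndex_eq_iff hx hy),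
    decompIndex u E, fun t ht x hx => hD.decompIndex_eq ht hx,
    fun x hx => (hD.decompIndex_spec hx).1, hD.decompIndex_self hv.1,
    fun x hx y hy hxy => hD.decompIndex_add hx hy hxy, fun t ht => hD.exists_decompIndex_eq ht,
    fun x hx y hy => (hE'.simI_zero_iff hx hy).symm,
    fun x hx y hy => (hE.quotLE_zero_iff hE' hx hy).symm⟩

/-- For an ordered and directed `(H, u)`-decomposition of `E = Γ(K, v)`,
`x ∼_{E_0} y` iff `x, y` lie in the same member of the decomposition, and the map
sending the class of `x` to the unique `t` with `x ∈ E_t` is a well-defined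
isomorphism of `E/E_0` onto `Γ(H, u)`. -/
theorem quotient_by_zero_part_iso {K H : Type*}
    [AddCommGroup K] [PartialOrder K] [IsOrderedAddMonoid K] [AddCommGroup H] [PartialOrder H] [IsOrderedAddMonoid H]
    (v : K) (u : H) (hv : IsStrongUnit v) (hu : IsStrongUnit u)
    (E : H → Set K) (hE : IsOrderedDecomp v u E) (hE' : IsDirectedDecomp v u E) :
    (∀ x ∈ Icc (0 : K) v, ∀ y ∈ Icc (0 : K) v,
      (SimI (E 0) x y ↔ ∃ t ∈ Icc (0 : H) u, x ∈ E t ∧ y ∈ E t)) ∧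
    ∃ φ : K → H, (∀ t ∈ Icc (0 : H) u, ∀ x ∈ E t, φ x = t) ∧
      QuotIsoWitness v (E 0) u φ :=
  quotient_by_zero_part_iso_general v u hv E hE hE'
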